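/- arXiv:1607.08291 — 9 statements merged into one kernel-verified Lean document; each statement's English description precedes it below -/
import Mathlib

section
/- Let H be a connected unicyclic k-uniform hypergraph (n = m(k-1), where n is the number of vertices and m the number of edges). Then every two vertices of H are contained together in at most two common edges. -/
/-!
Three edges through two common vertices `u ≠ v` span at most `2 + 3(k - 2) < 3(k - 1)` vertices,
so as a subhypergraph they have positive excess `|S|(k - 1) - |V(S)|`. In a connected hypergraph of
rank at most `k` the excess of a subfamily never exceeds the excess `m(k - 1) - n` of the whole
hypergraph: grow the subfamily one touching edge at a time, each new edge adding at most `k - 1`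
vertices. A unicyclic hypergraph has excess `0`, a contradiction.
-/

open Finset Relation

namespace Hypergraph

variable {V : Type*} [DecidableEq V]

def SharesEdge (E : Finset (Finset V)) (a b : V) : Prop := ∃ e ∈ E, a ∈ e ∧ b ∈ e

theorem mem_of_reflTransGen_sharesEdge {E : Finset (Finset V)} {W : Finset V}
    (hW : ∀ e ∈ E, (e ∩ W).Nonempty → e ⊆ W) {a b : V}
    (h : ReflTransGen (SharesEdge E) a b) (ha : a ∈ W) : b ∈ W := by
  induction h with
  | refl => exact ha
  | tail _ hcb ih =>
    obtain ⟨e, he, hc, hb⟩ := hcb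
    exact hW e he ⟨_, mem_inter.mpr ⟨hc, ih⟩⟩ hb

theorem card_union_le_of_inter_nonempty {k : ℕ} {e W : Finset V} (he : #e ≤ k)
    (hmeet : (e ∩ W).Nonempty) : #(e ∪ W) ≤ #W + (k - 1) := by
  have := card_union_add_card_inter e W
  have := hmeet.card_pos
  omega

theorem card_biUnion_le_of_forall_subset {k : ℕ} {T : Finset (Finset V)} {s : Finset V}
    (hT : ∀ e ∈ T, s ⊆ e ∧ #e ≤ k) : #(T.biUnion id) ≤ #s + #T * (k - #s) := by
  have hsub : T.biUnion id ⊆ s ∪ T.biUnion (· \ s) := by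
    intro x hx
    obtain ⟨e, he, hxe⟩ := mem_biUnion.mp hx
    by_cases hxs : x ∈ s
    · exact mem_union_left _ hxs
    · exact mem_union_right _ (mem_biUnion.mpr ⟨e, he, mem_sdiff.mpr ⟨hxe, hxs⟩⟩)
  calc #(T.biUnion id) ≤ #(s ∪ T.biUnion (· \ s)) := card_le_card hsub
    _ ≤ #s + #(T.biUnion (· \ s)) := card_union_le _ _
    _ ≤ #s + #T * (k - #s) := by
      gcongr
      refine card_biUnion_le_card_mul _ _ _ fun e he => ?_
      rw [card_sdiff_of_subset (hT e he).1]
      exact Nat.sub_le_sub_right (hT e he).2 _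

variable [Fintype V]

theorem exists_card_biUnion_insert_le {E S : Finset (Finset V)} {k : ℕ}
    (hrank : ∀ e ∈ E, #e ≤ k) (hconn : ∀ u v : V, ReflTransGen (SharesEdge E) u v)
    (hne : (S.biUnion id).Nonempty) (hW : S.biUnion id ≠ univ) :
    ∃ g ∈ E, g ∉ S ∧ #((insert g S).biUnion id) ≤ #(S.biUnion id) + (k - 1) := by
  obtain ⟨a, ha⟩ := hne
  obtain ⟨b, hb⟩ := not_forall.mp (mt eq_univ_of_forall hW)
  obtain ⟨g, hg, hmeet, hgW⟩ : ∃ g ∈ E, (g ∩ S.biUnion id).Nonempty ∧ ¬g ⊆ S.biUnion id := by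
    by_contra! hclosed
    exact hb (mem_of_reflTransGen_sharesEdge hclosed (hconn a b) ha)
  refine ⟨g, hg, fun hgS => hgW (subset_biUnion_of_mem id hgS), ?_⟩
  rw [biUnion_insert]
  exact card_union_le_of_inter_nonempty (hrank g hg) hmeet

/-- The excess `#S * (k - 1) - #(S.biUnion id)` of a subfamily is at most that of `E`, with the
subtractions moved across to avoid truncation. -/
theorem card_add_card_mul_le {E : Finset (Finset V)} {k : ℕ} (hrank : ∀ e ∈ E, #e ≤ k)
    (hconn : ∀ u v : V, ReflTransGen (SharesEdge E) u v) {S : Finset (Finset V)}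
    (hSE : S ⊆ E) (hne : (S.biUnion id).Nonempty) :
    Fintype.card V + #S * (k - 1) ≤ #(S.biUnion id) + #E * (k - 1) := by
  by_cases hW : S.biUnion id = univ
  · rw [hW, card_univ]
    have := card_le_card hSE
    gcongr
  · obtain ⟨g, hg, hgS, hcard⟩ := exists_card_biUnion_insert_le hrank hconn hne hW
    have hinsert := card_add_card_mul_le hrank hconn (insert_subset hg hSE)
      (hne.mono (biUnion_subset_biUnion_of_subset_left _ (subset_insert _ _)))
    rw [card_insert_of_notMem hgS, add_mul, one_mul] at hinsert
    omega
termination_by #E - #S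
decreasing_by
  have := card_le_card (insert_subset hg hSE)
  rw [card_insert_of_notMem hgS] at this ⊢
  omega

end Hypergraph

theorem stmt_2_general {V : Type*} [Fintype V] [DecidableEq V]
    (E : Finset (Finset V)) (k : ℕ)
    (huniform : ∀ e ∈ E, e.card = k)
    (hconn : ∀ u v : V, Relation.ReflTransGen (fun a b => ∃ e ∈ E, a ∈ e ∧ b ∈ e) u v)
    (hcyc : Fintype.card V = E.card * (k - 1)) :
    ∀ u v : V, u ≠ v → (E.filter (fun e => u ∈ e ∧ v ∈ e)).card ≤ 2 := by
  intro u v huv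
  by_contra! hthree
  obtain ⟨T, hTuv, hT⟩ := exists_subset_card_eq (show 3 ≤ _ from hthree)
  have hTE : T ⊆ E := hTuv.trans (filter_subset _ _)
  have hpair : ∀ e ∈ T, {u, v} ⊆ e ∧ #e ≤ k := fun e he => by
    obtain ⟨heE, hu, hv⟩ := mem_filter.mp (hTuv he)
    exact ⟨insert_subset hu (singleton_subset_iff.mpr hv), (huniform e heE).le⟩
  obtain ⟨e, he⟩ : T.Nonempty := card_pos.mp (by omega)
  have hk : 2 ≤ k := card_pair huv ▸ (card_le_card (hpair e he).1).trans (hpair e he).2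
  have hspan := Hypergraph.card_biUnion_le_of_forall_subset hpair
  have hexcess := Hypergraph.card_add_card_mul_le (fun e he => (huniform e he).le) hconn hTE
    ⟨u, mem_biUnion.mpr ⟨e, he, (hpair e he).1 (mem_insert_self u _)⟩⟩
  rw [card_pair huv, hT] at hspan
  rw [hT] at hexcess
  omega

/-- in a connected unicyclic k-uniform hypergraph (n = m(k-1)),
every two distinct vertices lie together in at most two edges. -/
theorem stmt_2 {V : Type*} [Fintype V] [DecidableEq V]
    (E : Finset (Finset V)) (k : ℕ) (hk : 2 ≤ k)
    (huniform : ∀ e ∈ E, e.card = k)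
    (hconn : ∀ u v : V, Relation.ReflTransGen (fun a b => ∃ e ∈ E, a ∈ e ∧ b ∈ e) u v)
    (hcyc : Fintype.card V = E.card * (k - 1)) :
    ∀ u v : V, u ≠ v → (E.filter (fun e => u ∈ e ∧ v ∈ e)).card ≤ 2 :=
  stmt_2_general E k huniform hconn hcyc
end

section
/- Let H be a connected unicyclic k-uniform hypergraph. Then every three distinct vertices of H have at most one common edge containing all three. -/
/-!
Grow a vertex set `U` of a connected hypergraph by repeatedly adding an edge that meets it but
is not contained in it: each such edge brings at most `k - 1` new vertices, so
`|V| ≤ |U| + (k - 1) · #{edges not inside U}`. If two edges `e ≠ f` shared three vertices, then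
`U = e ∪ f` has at most `2k - 3` vertices and at most `|E| - 2` edges leave it, whence
`|E|(k - 1) ≤ 2k - 3 + (|E| - 2)(k - 1)`, which is impossible.
-/

open Finset

theorem Relation.ReflTransGen.exists_mem_notMem {α : Type*} {r : α → α → Prop} {s : Set α}
    {a b : α} (h : Relation.ReflTransGen r a b) (ha : a ∈ s) (hb : b ∉ s) :
    ∃ c d, r c d ∧ c ∈ s ∧ d ∉ s := by
  induction h with
  | refl => exact absurd ha hb
  | @tail c d _ hcd ih =>
    by_cases hc : c ∈ s
    · exact ⟨c, d, hcd, hc, hb⟩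
    · exact ih hc

section Hypergraph

variable {V : Type*} [Fintype V] [DecidableEq V] {E : Finset (Finset V)}

theorem exists_edge_meets_of_not_subset (U : Finset V) (hU : U.Nonempty) (hUV : U ≠ univ)
    (hconn : ∀ u v : V, Relation.ReflTransGen (fun a b => ∃ e ∈ E, a ∈ e ∧ b ∈ e) u v) :
    ∃ g ∈ E, (g ∩ U).Nonempty ∧ ¬g ⊆ U := by
  obtain ⟨b, hb⟩ := hU
  obtain ⟨a, -, ha⟩ := exists_of_ssubset (ssubset_univ_iff.mpr hUV)
  obtain ⟨c, d, ⟨g, hg, hcg, hdg⟩, hc, hd⟩ :=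
    (hconn b a).exists_mem_notMem (s := ↑U) (mem_coe.mpr hb) (by simpa using ha)
  exact ⟨g, hg, ⟨c, mem_inter.mpr ⟨hcg, hc⟩⟩, fun hgU => hd (hgU hdg)⟩

theorem card_le_card_add_mul_card_filter_not_subset (k : ℕ) (hE : ∀ e ∈ E, #e ≤ k)
    (hconn : ∀ u v : V, Relation.ReflTransGen (fun a b => ∃ e ∈ E, a ∈ e ∧ b ∈ e) u v)
    (U : Finset V) (hU : U.Nonempty) :
    Fintype.card V ≤ #U + (k - 1) * #(E.filter (fun e => ¬e ⊆ U)) := by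
  by_cases hUV : U = univ
  · simp [hUV]
  obtain ⟨g, hg, hmeet, hgU⟩ := exists_edge_meets_of_not_subset U hU hUV hconn
  have hnew : #(g \ U) ≤ k - 1 := by
    have : #(g \ U) < #g := by
      rw [← sdiff_inter_self_left]
      exact card_lt_card (sdiff_ssubset inter_subset_left hmeet)
    have := hE g hg
    omega
  have hunion : #(g \ U) + #U = #(g ∪ U) := card_sdiff_add_card g U
  have hfilter : #(E.filter (fun e => ¬e ⊆ g ∪ U)) < #(E.filter (fun e => ¬e ⊆ U)) := by
    refine card_lt_card ((ssubset_iff_of_subset ?_).mpr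
      ⟨g, mem_filter.mpr ⟨hg, hgU⟩, fun h => (mem_filter.mp h).2 subset_union_left⟩)
    exact monotone_filter_right E fun e _ h heU => h (heU.trans subset_union_right)
  have ih := card_le_card_add_mul_card_filter_not_subset k hE hconn (g ∪ U)
    (hU.mono subset_union_right)
  have := Nat.mul_le_mul_left (k - 1) (Nat.succ_le_of_lt hfilter)
  rw [Nat.mul_succ] at this
  omega
termination_by Fintype.card V - #U
decreasing_by
  have : #U < #(g ∪ U) := card_lt_card
    (Finset.ssubset_iff_subset_ne.mpr ⟨subset_union_right, fun h => hgU (h ▸ subset_union_left)⟩)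
  have := card_le_univ (g ∪ U)
  omega

end Hypergraph

theorem stmt_3_general {V : Type*} [Fintype V] [DecidableEq V]
    (E : Finset (Finset V)) (k : ℕ)
    (huniform : ∀ e ∈ E, e.card = k)
    (hconn : ∀ u v : V, Relation.ReflTransGen (fun a b => ∃ e ∈ E, a ∈ e ∧ b ∈ e) u v)
    (hcyc : Fintype.card V = E.card * (k - 1)) :
    ∀ u v w : V, u ≠ v → u ≠ w → v ≠ w →
      (E.filter (fun e => u ∈ e ∧ v ∈ e ∧ w ∈ e)).card ≤ 1 := by
  intro u v w huv huw hvw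
  by_contra! htwo
  obtain ⟨e, he, f, hf, hef⟩ := one_lt_card.mp htwo
  simp only [mem_filter] at he hf
  have hgrowth := card_le_card_add_mul_card_filter_not_subset k
    (fun g hg => (huniform g hg).le) hconn (e ∪ f) ⟨u, mem_union_left f he.2.1⟩
  have hother : #(E.filter (fun g => ¬g ⊆ e ∪ f)) + 2 ≤ #E := by
    have hinside : {e, f} ⊆ E.filter (fun g => g ⊆ e ∪ f) := by
      simp only [insert_subset_iff, singleton_subset_iff, mem_filter]
      exact ⟨⟨he.1, subset_union_left⟩, hf.1, subset_union_right⟩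
    have := card_le_card hinside
    rw [card_pair_eq_two_iff.mpr hef] at this
    have := card_filter_add_card_filter_not (s := E) (fun g => g ⊆ e ∪ f)
    omega
  have hcommon : 3 ≤ #(e ∩ f) := by
    have hsub : ({u, v, w} : Finset V) ⊆ e ∩ f := by
      simp only [insert_subset_iff, singleton_subset_iff, mem_inter]
      exact ⟨⟨he.2.1, hf.2.1⟩, ⟨he.2.2.1, hf.2.2.1⟩, ⟨he.2.2.2, hf.2.2.2⟩⟩
    simpa [card_insert_of_notMem, huv, huw, hvw] using card_le_card hsub
  have hsum : #(e ∪ f) + #(e ∩ f) = k + k := by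
    rw [card_union_add_card_inter, huniform e he.1, huniform f hf.1]
  have := Nat.mul_le_mul_left (k - 1) hother
  rw [mul_add, mul_comm (k - 1) #E] at this
  omega

/-- in a connected unicyclic k-uniform hypergraph, every three distinct
vertices have at most one common edge. -/
theorem stmt_3 {V : Type*} [Fintype V] [DecidableEq V]
    (E : Finset (Finset V)) (k : ℕ) (hk : 2 ≤ k)
    (huniform : ∀ e ∈ E, e.card = k)
    (hconn : ∀ u v : V, Relation.ReflTransGen (fun a b => ∃ e ∈ E, a ∈ e ∧ b ∈ e) u v)
    (hcyc : Fintype.card V = E.card * (k - 1)) :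
    ∀ u v w : V, u ≠ v → u ≠ w → v ≠ w →
      (E.filter (fun e => u ∈ e ∧ v ∈ e ∧ w ∈ e)).card ≤ 1 :=
  stmt_3_general E k huniform hconn hcyc
end

section
/- Let F be a connected bicyclic k-uniform hypergraph (n = m(k-1) - 1). Then every two distinct vertices of F share at most three common edges, and every three distinct vertices of F have at most two common edges. -/
/-!
Measure a set of edges `T` by its cyclomatic number `∑ (|e| - 1) + 1 - |⋃ T|`. Adding an edge that
meets the vertices already covered never decreases it, so by connectivity the cyclomatic number of
any nonempty set of edges is at most that of the whole hypergraph, which the hypothesis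
`n = m(k-1) - 1` makes equal to `2`. On the other hand, `p` edges sharing `s` common vertices cover at
most `s + ∑ (|e| - s)` vertices, so their cyclomatic number is at least `(s - 1)(p - 1)`. Hence
`(s - 1)(p - 1) ≤ 2`, i.e. `p ≤ 3` for `s = 2` and `p ≤ 2` for `s = 3`.
-/

open Finset

namespace Hypergraph

variable {V : Type*} [DecidableEq V]

def cyclomaticNumber (T : Finset (Finset V)) : ℤ :=
  ∑ e ∈ T, ((e.card : ℤ) - 1) + 1 - (T.sup id).card

theorem card_sup_le_of_forall_subset {r : Finset V} {S : Finset (Finset V)}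
    (hr : ∀ e ∈ S, r ⊆ e) :
    ((S.sup id).card : ℤ) ≤ r.card + ∑ e ∈ S, ((e.card : ℤ) - r.card) := by
  have hcover : S.sup id ⊆ r ∪ S.biUnion (· \ r) := by
    intro x hx
    obtain ⟨e, he, hxe⟩ := mem_sup.mp hx
    by_cases hxr : x ∈ r
    · exact mem_union_left _ hxr
    · exact mem_union_right _ (mem_biUnion.mpr ⟨e, he, mem_sdiff.mpr ⟨hxe, hxr⟩⟩)
  have hsdiff : ∀ e ∈ S, ((e \ r).card : ℤ) = e.card - r.card := fun e he => by
    rw [card_sdiff_of_subset (hr e he), Nat.cast_sub (card_le_card (hr e he))]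
  calc ((S.sup id).card : ℤ) ≤ r.card + ∑ e ∈ S, (e \ r).card := by
        exact_mod_cast (card_le_card hcover).trans (card_union_le _ _ |>.trans
          (Nat.add_le_add_left card_biUnion_le _))
    _ = r.card + ∑ e ∈ S, ((e.card : ℤ) - r.card) := by
        push_cast
        rw [sum_congr rfl hsdiff]

theorem mul_le_cyclomaticNumber_of_forall_subset {r : Finset V} {S : Finset (Finset V)}
    (hr : ∀ e ∈ S, r ⊆ e) :
    ((r.card : ℤ) - 1) * (S.card - 1) ≤ cyclomaticNumber S := by
  have hsum : ∑ e ∈ S, ((e.card : ℤ) - 1) =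
      ∑ e ∈ S, ((e.card : ℤ) - r.card) + S.card * ((r.card : ℤ) - 1) := by
    rw [← nsmul_eq_mul, ← sum_const, ← sum_add_distrib]
    exact sum_congr rfl fun _ _ => by ring
  have := card_sup_le_of_forall_subset hr
  unfold cyclomaticNumber
  linarith

theorem cyclomaticNumber_le_insert {T : Finset (Finset V)} {e : Finset V} (heT : e ∉ T)
    (hmeet : (e ∩ T.sup id).Nonempty) :
    cyclomaticNumber T ≤ cyclomaticNumber (insert e T) := by
  have hunion := card_union_add_card_inter e (T.sup id)
  have hinter := card_pos.mpr hmeet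
  unfold cyclomaticNumber
  rw [sum_insert heT, sup_insert]
  change _ ≤ _ + 1 - ((e ∪ T.sup id).card : ℤ)
  omega

theorem exists_mem_not_mem_meets_sup {E T : Finset (Finset V)}
    (hconn : ∀ u v : V, Relation.ReflTransGen (fun a b => ∃ e ∈ E, a ∈ e ∧ b ∈ e) u v)
    (hne : ∀ e ∈ E, e.Nonempty) (hTE : T ⊆ E) (hT : T.Nonempty) (hTE' : T ≠ E) :
    ∃ e ∈ E, e ∉ T ∧ (e ∩ T.sup id).Nonempty := by
  by_contra! hsep
  obtain ⟨e₀, he₀⟩ := hT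
  obtain ⟨x, hx⟩ := hne e₀ (hTE he₀)
  obtain ⟨f, hfE, hfT⟩ := exists_of_ssubset (hTE.ssubset_of_ne hTE')
  obtain ⟨y, hy⟩ := hne f hfE
  -- With no edge of `E \ T` meeting it, the vertex set of `T` is closed under adjacency.
  have hclosed : ∀ z, Relation.ReflTransGen (fun a b => ∃ e ∈ E, a ∈ e ∧ b ∈ e) x z →
      z ∈ T.sup id := by
    intro z hz
    induction hz with
    | refl => exact mem_sup.mpr ⟨e₀, he₀, hx⟩
    | @tail b c _ hbc hb =>
      obtain ⟨e, heE, hbe, hce⟩ := hbc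
      by_cases heT : e ∈ T
      · exact mem_sup.mpr ⟨e, heT, hce⟩
      · exact (eq_empty_iff_forall_notMem.mp (hsep e heE heT) b (mem_inter.mpr ⟨hbe, hb⟩)).elim
  exact eq_empty_iff_forall_notMem.mp (hsep f hfE hfT) y
    (mem_inter.mpr ⟨hy, hclosed y (hconn x y)⟩)

theorem cyclomaticNumber_le_of_subset {E T : Finset (Finset V)}
    (hconn : ∀ u v : V, Relation.ReflTransGen (fun a b => ∃ e ∈ E, a ∈ e ∧ b ∈ e) u v)
    (hne : ∀ e ∈ E, e.Nonempty) (hTE : T ⊆ E) (hT : T.Nonempty) :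
    cyclomaticNumber T ≤ cyclomaticNumber E := by
  by_cases hTE' : T = E
  · rw [hTE']
  obtain ⟨e, heE, heT, hmeet⟩ := exists_mem_not_mem_meets_sup hconn hne hTE hT hTE'
  calc cyclomaticNumber T ≤ cyclomaticNumber (insert e T) := cyclomaticNumber_le_insert heT hmeet
    _ ≤ cyclomaticNumber E :=
      cyclomaticNumber_le_of_subset hconn hne (insert_subset heE hTE) (insert_nonempty e T)
termination_by (E \ T).card
decreasing_by
  rw [sdiff_insert]
  exact card_erase_lt_of_mem (mem_sdiff.mpr ⟨heE, heT⟩)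

theorem sup_id_eq_univ [Fintype V] {E : Finset (Finset V)}
    (hconn : ∀ u v : V, Relation.ReflTransGen (fun a b => ∃ e ∈ E, a ∈ e ∧ b ∈ e) u v)
    (hE : (E.sup id).Nonempty) : E.sup id = univ := by
  obtain ⟨x, hx⟩ := hE
  refine eq_univ_of_forall fun v => ?_
  rcases (hconn x v).cases_tail with rfl | ⟨_, _, e, he, _, hve⟩
  · exact hx
  · exact mem_sup.mpr ⟨e, he, hve⟩

theorem cyclomaticNumber_eq_of_uniform [Fintype V] {E : Finset (Finset V)} {k : ℕ}
    (huniform : ∀ e ∈ E, e.card = k) (hcover : E.sup id = univ) :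
    cyclomaticNumber E = E.card * ((k : ℤ) - 1) + 1 - Fintype.card V := by
  unfold cyclomaticNumber
  rw [sum_congr rfl fun e he => by rw [huniform e he], sum_const, nsmul_eq_mul, hcover, card_univ]

end Hypergraph

open Hypergraph in
/-- in a connected bicyclic k-uniform hypergraph (n = m(k-1) - 1),
every two distinct vertices share at most three edges and every three distinct
vertices share at most two edges. -/
theorem stmt_4 {V : Type*} [Fintype V] [DecidableEq V]
    (E : Finset (Finset V)) (k : ℕ) (hk : 2 ≤ k)
    (huniform : ∀ e ∈ E, e.card = k)
    (hconn : ∀ u v : V, Relation.ReflTransGen (fun a b => ∃ e ∈ E, a ∈ e ∧ b ∈ e) u v)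
    (hcyc : Fintype.card V + 1 = E.card * (k - 1)) :
    (∀ u v : V, u ≠ v → (E.filter (fun e => u ∈ e ∧ v ∈ e)).card ≤ 3) ∧
    (∀ u v w : V, u ≠ v → u ≠ w → v ≠ w →
      (E.filter (fun e => u ∈ e ∧ v ∈ e ∧ w ∈ e)).card ≤ 2) := by
  have hne : ∀ e ∈ E, e.Nonempty := fun e he => card_pos.mp (by rw [huniform e he]; omega)
  obtain ⟨e₀, he₀⟩ : E.Nonempty := nonempty_iff_ne_empty.mpr (by rintro rfl; simp at hcyc)
  have hcover := sup_id_eq_univ hconn ((hne e₀ he₀).mono (le_sup (f := id) he₀))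
  have hbicyclic : cyclomaticNumber E = 2 := by
    have := congrArg (Nat.cast : ℕ → ℤ) hcyc
    push_cast [Nat.cast_sub (by omega : 1 ≤ k)] at this
    rw [cyclomaticNumber_eq_of_uniform huniform hcover]
    linarith
  have hcommon : ∀ r : Finset V, ∀ S ⊆ E, (∀ e ∈ S, r ⊆ e) →
      ((r.card : ℤ) - 1) * (S.card - 1) ≤ 2 := by
    intro r S hSE hr
    rcases S.eq_empty_or_nonempty with rfl | hS
    · simp only [card_empty]; omega
    · exact hbicyclic ▸ (mul_le_cyclomaticNumber_of_forall_subset hr).trans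
        (cyclomaticNumber_le_of_subset hconn hne hSE hS)
  refine ⟨fun u v huv => ?_, fun u v w huv huw hvw => ?_⟩
  · have := hcommon {u, v} (E.filter fun e => u ∈ e ∧ v ∈ e)
      (filter_subset _ E) (by simp [insert_subset_iff])
    rw [card_pair huv] at this
    omega
  · have := hcommon {u, v, w} (E.filter fun e => u ∈ e ∧ v ∈ e ∧ w ∈ e)
      (filter_subset _ E) (by simp [insert_subset_iff])
    rw [card_insert_of_notMem (by simp [huv, huw]), card_pair hvw] at this
    omega
end

section
/- Let G₁ be the simple graph on m edges obtained from a triangle C₃ by attaching m−3 pendant edges at one of its vertices. Then the characteristic polynomial of the adjacency matrix of G₁ is φ_{G₁}(x) = x^{m−4}(x+1)(x³ − x² − (m−1)x + m − 3). -/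
/-!
Expanding the determinant of `xI − A` along a pendant vertex `v` attached to `u` gives
Schwenk's recurrence `φ_G = x φ_{G−v} − φ_{G−u−v}`. Deleting the last pendant vertex of `G₁` on
`m + 1` vertices leaves `G₁` on `m` vertices, and deleting also the triangle vertex carrying the
pendants leaves a single edge and `m − 3` isolated vertices, with characteristic polynomial
`x^(m−3)(x² − 1)`. So `φ_{m+1} = x φ_m − x^(m−3)(x² − 1)`, and induction from the triangle,
`φ = x³ − 3x − 2`, gives the formula.
-/

open Polynomial

/-- Adjacency matrix of G₁: a triangle on vertices 0,1,2 with m-3 pendant edges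
attached at vertex 0; the vertices are 0,…,m-1. -/
def G1adj (m : ℕ) : Matrix (Fin m) (Fin m) ℝ :=
  Matrix.of fun i j =>
    if i ≠ j ∧ ((i.val ≤ 2 ∧ j.val ≤ 2) ∨ i.val = 0 ∨ j.val = 0) then 1 else 0

open Matrix

namespace Matrix

variable {R : Type*} [CommRing R]

theorem charmatrix_submatrix {m n : Type*} [Fintype m] [DecidableEq m] [Fintype n]
    [DecidableEq n] (M : Matrix n n R) {f : m → n} (hf : Function.Injective f) :
    (M.submatrix f f).charmatrix = M.charmatrix.submatrix f f := by
  ext i j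
  rcases eq_or_ne i j with rfl | hij
  · simp
  · simp [hij, hf.ne hij]

variable {n : ℕ}

theorem det_of_pendant_last (M : Matrix (Fin (n + 2)) (Fin (n + 2)) R)
    (hrow : ∀ j, j ≠ 0 → j ≠ Fin.last _ → M (Fin.last _) j = 0)
    (hcol : ∀ i, i ≠ 0 → i ≠ Fin.last _ → M i (Fin.last _) = 0) :
    M.det = M (Fin.last _) (Fin.last _) * (M.submatrix Fin.castSucc Fin.castSucc).det
      - M (Fin.last _) 0 * M 0 (Fin.last _) *
        (M.submatrix (fun i : Fin n => i.castSucc.succ) (fun i => i.castSucc.succ)).det := by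
  have hinner (i : Fin n) : i.castSucc.succ ≠ 0 ∧ i.castSucc.succ ≠ Fin.last (n + 1) :=
    ⟨Fin.succ_ne_zero _, by simp [Fin.ext_iff, i.isLt.ne]⟩
  have hminor : (M.submatrix Fin.castSucc Fin.succ).det =
      (-1) ^ n * M 0 (Fin.last _) *
        (M.submatrix (fun i : Fin n => i.castSucc.succ) (fun i => i.castSucc.succ)).det := by
    rw [det_succ_column _ (Fin.last n), Fin.sum_univ_succ, Fintype.sum_eq_zero]
    · simp [Function.comp_def]
    · intro i
      simp [hcol _ (hinner i).1 (hinner i).2]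
  rw [det_succ_row _ (Fin.last _), Fin.sum_univ_succ, Fin.sum_univ_castSucc,
    Fintype.sum_eq_zero, Fin.succAbove_zero, Fin.succAbove_last, hminor]
  · have hsq : ((-1 : R) ^ n) ^ 2 = 1 := by rw [← pow_mul, pow_mul', neg_one_sq, one_pow]
    simp only [Fin.val_last, Fin.val_zero, Fin.succ_last, Nat.succ_eq_add_one, Fin.succAbove_last,
      add_zero]
    set a := (M.submatrix Fin.castSucc Fin.castSucc).det
    set b := (M.submatrix (fun i : Fin n => i.castSucc.succ) (fun i => i.castSucc.succ)).det
    linear_combination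
      (M (Fin.last _) (Fin.last _) * a - M (Fin.last _) 0 * M 0 (Fin.last _) * b) * hsq
  · intro j
    simp [hrow _ (hinner j).1 (hinner j).2]

theorem charpoly_of_pendant_last (A : Matrix (Fin (n + 2)) (Fin (n + 2)) R)
    (hrow : ∀ j, j ≠ 0 → j ≠ Fin.last _ → A (Fin.last _) j = 0)
    (hcol : ∀ i, i ≠ 0 → i ≠ Fin.last _ → A i (Fin.last _) = 0) :
    A.charpoly = (X - C (A (Fin.last _) (Fin.last _))) *
        (A.submatrix Fin.castSucc Fin.castSucc).charpoly
      - C (A (Fin.last _) 0 * A 0 (Fin.last _)) *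
        (A.submatrix (fun i : Fin n => i.castSucc.succ) (fun i => i.castSucc.succ)).charpoly := by
  have hinj : Function.Injective (fun i : Fin n => i.castSucc.succ) :=
    (Fin.succ_injective _).comp (Fin.castSucc_injective _)
  rw [charpoly, det_of_pendant_last, charpoly, charpoly,
    charmatrix_submatrix _ (Fin.castSucc_injective _), charmatrix_submatrix _ hinj]
  · simp [Fin.ext_iff]
  · intro j hj0 hjl
    simp [hrow j hj0 hjl, Ne.symm hjl]
  · intro i hi0 hil
    simp [hcol i hi0 hil, hil]

end Matrix

def singleEdgeAdj (R : Type*) [CommRing R] (n : ℕ) : Matrix (Fin n) (Fin n) R :=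
  Matrix.of fun i j => if i ≠ j ∧ i.val ≤ 1 ∧ j.val ≤ 1 then 1 else 0

theorem singleEdgeAdj_submatrix_castSucc (R : Type*) [CommRing R] (n : ℕ) :
    (singleEdgeAdj R (n + 1)).submatrix Fin.castSucc Fin.castSucc = singleEdgeAdj R n := by
  ext i j
  simp only [singleEdgeAdj, submatrix_apply, of_apply, ne_eq, Fin.castSucc_inj, Fin.val_castSucc]

theorem charpoly_singleEdgeAdj (R : Type*) [CommRing R] (k : ℕ) :
    (singleEdgeAdj R (k + 2)).charpoly = X ^ k * (X ^ 2 - 1) := by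
  induction k with
  | zero =>
    rw [charpoly, det_fin_two]
    simp [singleEdgeAdj]
    ring
  | succ k ih =>
    rw [charpoly_of_pendant_last, singleEdgeAdj_submatrix_castSucc, ih]
    · simp [singleEdgeAdj]
      ring
    · intro j _ _
      simp [singleEdgeAdj]
    · intro i _ _
      simp [singleEdgeAdj]

theorem G1adj_submatrix_castSucc (n : ℕ) :
    (G1adj (n + 1)).submatrix Fin.castSucc Fin.castSucc = G1adj n := by
  ext i j
  simp only [G1adj, submatrix_apply, of_apply, ne_eq, Fin.castSucc_inj, Fin.val_castSucc]

theorem G1adj_submatrix_succ_castSucc (n : ℕ) :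
    (G1adj (n + 2)).submatrix (fun i : Fin n => i.castSucc.succ) (fun i => i.castSucc.succ) =
      singleEdgeAdj ℝ n := by
  ext i j
  simp only [G1adj, singleEdgeAdj, submatrix_apply, of_apply, ne_eq, Fin.succ_inj,
    Fin.castSucc_inj, Fin.val_succ, Fin.val_castSucc]
  congr 1
  simp only [Nat.add_eq_zero_iff, one_ne_zero, and_false, or_false, Nat.reduceLeDiff]

theorem charpoly_G1adj_three : (G1adj 3).charpoly = X ^ 3 - 3 * X - 2 := by
  rw [charpoly, det_fin_three]
  simp [G1adj]
  ring

theorem G1adj_apply_eq_zero {m : ℕ} {i j : Fin m}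
    (h : 3 ≤ i.val ∧ j.val ≠ 0 ∨ 3 ≤ j.val ∧ i.val ≠ 0) : G1adj m i j = 0 := by
  rw [G1adj, of_apply, if_neg]
  omega

theorem charpoly_G1adj_succ {m : ℕ} (hm : 3 ≤ m) :
    (G1adj (m + 1)).charpoly = X * (G1adj m).charpoly - X ^ (m - 3) * (X ^ 2 - 1) := by
  obtain ⟨k, rfl⟩ := Nat.exists_eq_add_of_le' hm
  rw [Nat.add_sub_cancel, charpoly_of_pendant_last (n := k + 2), G1adj_submatrix_castSucc,
    G1adj_submatrix_succ_castSucc, charpoly_singleEdgeAdj]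
  · simp [G1adj]
  · intro j hj0 _
    exact G1adj_apply_eq_zero (.inl ⟨by simp, Fin.val_ne_iff.mpr hj0⟩)
  · intro i hi0 _
    exact G1adj_apply_eq_zero (.inr ⟨by simp, Fin.val_ne_iff.mpr hi0⟩)

/-- φ_{G₁}(x) = x^{m-4}(x+1)(x³ - x² - (m-1)x + m - 3). -/
theorem stmt_6 (m : ℕ) (hm : 4 ≤ m) :
    (G1adj m).charpoly =
      X ^ (m - 4) * (X + 1) *
        (X ^ 3 - X ^ 2 - C ((m : ℝ) - 1) * X + C ((m : ℝ) - 3)) := by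
  obtain ⟨k, rfl⟩ := Nat.exists_eq_add_of_le' hm
  simp only [Nat.add_sub_cancel, Nat.cast_add, map_sub, map_add, map_natCast, map_ofNat]
  induction k with
  | zero =>
    rw [charpoly_G1adj_succ le_rfl, charpoly_G1adj_three]
    norm_num
    ring
  | succ k ih =>
    rw [show k + 1 + 4 = k + 4 + 1 by ring, charpoly_G1adj_succ (by omega), ih (by omega),
      show k + 4 - 3 = k + 1 by omega]
    push_cast
    ring
end

section
/- Let G(a,b) be the multigraph consisting of two vertices u,v joined by two parallel edges, with a pendant edges attached at u and b pendant edges attached at v, where a + b = m − 2. Then the characteristic polynomial of its adjacency matrix is φ_{G(a,b)}(x) = x^{m−4}(x⁴ − (m+2)x² + ab). In particular, the spectral radius satisfies ρ(G(a,b))² = (m + 2 + √((m+2)² − 4ab))/2. -/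
/-!
Split the vertices into four classes: `u`, `v`, the pendant vertices at `u` and those at `v`.
Adjacency depends only on the classes, so `A = P W Pᵀ` with `W` a `4 × 4` matrix and `P` the
`0/1` class-indicator matrix. As `AB` and `BA` have the same characteristic polynomial up to a
power of `X`, `φ_A = X ^ (m - 4) φ_B` for `B = W Pᵀ P = W · diag(1, 1, a, b)`, and
`φ_B = x⁴ - (m + 2) x² + ab` is biquadratic: its largest root is the square root of the larger
root of `y² - (m + 2) y + ab`.
-/

open Polynomial

/-- Adjacency matrix of the multigraph G(a,b): vertices u = 0 and v = 1 joined by two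
parallel edges, a pendant edges at u (vertices 2,…,a+1) and b pendant edges at v
(vertices a+2,…,a+b+1). -/
def Gab (a b : ℕ) : Matrix (Fin (a + b + 2)) (Fin (a + b + 2)) ℝ :=
  Matrix.of fun i j =>
    if (i.val = 0 ∧ j.val = 1) ∨ (i.val = 1 ∧ j.val = 0) then 2
    else if (i.val = 0 ∧ 2 ≤ j.val ∧ j.val ≤ a + 1) ∨
            (j.val = 0 ∧ 2 ≤ i.val ∧ i.val ≤ a + 1) then 1
    else if (i.val = 1 ∧ a + 2 ≤ j.val) ∨ (j.val = 1 ∧ a + 2 ≤ i.val) then 1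
    else 0

open Matrix Finset

namespace Matrix

variable {n k : Type*} (R : Type*) [CommRing R] [DecidableEq k]

def classIndicator (f : n → k) : Matrix n k R :=
  of fun i c => if f i = c then 1 else 0

variable {R}

theorem submatrix_eq_classIndicator_mul [Fintype k] (W : Matrix k k R) (f : n → k) :
    W.submatrix f f = classIndicator R f * (W * (classIndicator R f)ᵀ) := by
  ext i j
  simp [classIndicator, mul_apply]

theorem transpose_classIndicator_mul_classIndicator [Fintype n] (f : n → k) :
    (classIndicator R f)ᵀ * classIndicator R f = diagonal fun c => (#{i | f i = c} : R) := by
  ext c d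
  simp only [classIndicator, mul_apply, transpose_apply, of_apply, boole_mul, ← ite_and,
    diagonal_apply]
  split_ifs with h
  · simp [h, sum_boole]
  · exact sum_eq_zero fun i _ => if_neg fun hi => h (hi.1.symm.trans hi.2)

theorem charpoly_submatrix_self [Fintype n] [DecidableEq n] [Fintype k] (W : Matrix k k R)
    (f : n → k) (hcard : Fintype.card k ≤ Fintype.card n) :
    (W.submatrix f f).charpoly =
      X ^ (Fintype.card n - Fintype.card k) *
        (W * diagonal fun c => (#{i | f i = c} : R)).charpoly := by
  rw [submatrix_eq_classIndicator_mul, charpoly_mul_comm_of_le _ _ hcard, Matrix.mul_assoc,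
    transpose_classIndicator_mul_classIndicator]

end Matrix

theorem Fin.card_filter_eq_of_iff_mem_Ico {n : ℕ} (lo hi : ℕ) (hhi : hi ≤ n) {p : Fin n → Prop}
    [DecidablePred p] (hp : ∀ i : Fin n, p i ↔ (i : ℕ) ∈ Ico lo hi) :
    #{i | p i} = hi - lo := by
  rw [filter_congr fun i _ => hp i, card_filter,
    Fin.sum_univ_eq_sum_range (fun j => if j ∈ Ico lo hi then 1 else 0), ← card_filter,
    ← Nat.card_Ico lo hi]
  congr 1
  ext j
  simp only [mem_filter, mem_range, mem_Ico]
  omega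

theorem isGreatest_setOf_isRoot_X_pow_mul_biquadratic (k : ℕ) {c d : ℝ} (hc : 0 ≤ c)
    (hdisc : 0 ≤ c ^ 2 - 4 * d) :
    IsGreatest {x : ℝ | (X ^ k * (X ^ 4 - C c * X ^ 2 + C d)).IsRoot x}
      √((c + √(c ^ 2 - 4 * d)) / 2) := by
  set s := √(c ^ 2 - 4 * d)
  have hs : s ^ 2 = c ^ 2 - 4 * d := Real.sq_sqrt hdisc
  have hs0 : 0 ≤ s := Real.sqrt_nonneg _
  have isRoot_iff (x : ℝ) : (X ^ k * (X ^ 4 - C c * X ^ 2 + C d)).IsRoot x ↔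
      x ^ k = 0 ∨ (x ^ 2 - (c + s) / 2) * (x ^ 2 - (c - s) / 2) = 0 := by
    have factor : x ^ 4 - c * x ^ 2 + d = (x ^ 2 - (c + s) / 2) * (x ^ 2 - (c - s) / 2) := by
      linear_combination (1 / 4 : ℝ) * hs
    simp [factor]
  refine ⟨?_, fun x hx => ?_⟩
  · rw [Set.mem_ofPred_eq, isRoot_iff, Real.sq_sqrt (by positivity)]
    simp
  · rcases (isRoot_iff x).1 hx with hx | hx
    · rw [eq_zero_of_pow_eq_zero hx]
      exact Real.sqrt_nonneg _
    · have hx2 : x ^ 2 ≤ (c + s) / 2 := by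
        rcases mul_eq_zero.1 hx with hx | hx <;> linarith
      exact (le_abs_self x).trans (Real.abs_le_sqrt hx2)

namespace Gab

-- Edge multiplicities between the classes `u`, `v`, pendants at `u`, pendants at `v`.
def classMatrix : Matrix (Fin 4) (Fin 4) ℝ :=
  !![0, 2, 1, 0;
     2, 0, 0, 1;
     1, 0, 0, 0;
     0, 1, 0, 0]

def vertexClass (a b : ℕ) (i : Fin (a + b + 2)) : Fin 4 :=
  if i.val = 0 then 0 else if i.val = 1 then 1 else if i.val ≤ a + 1 then 2 else 3

theorem eq_submatrix_classMatrix (a b : ℕ) :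
    Gab a b = classMatrix.submatrix (vertexClass a b) (vertexClass a b) := by
  ext i j
  simp only [Gab, vertexClass, classMatrix, of_apply, submatrix_apply]
  split_ifs <;> first | rfl | omega

theorem vertexClass_eq_iff (a b : ℕ) (i : Fin (a + b + 2)) (c : Fin 4) :
    vertexClass a b i = c ↔ (i : ℕ) ∈ Ico (![0, 1, 2, a + 2] c) (![1, 2, a + 2, a + b + 2] c) := by
  rw [mem_Ico]
  unfold vertexClass
  fin_cases c <;> simp only [Fin.zero_eta, Fin.mk_one, Fin.reduceFinMk, Matrix.cons_val] <;>
    split_ifs <;> simp only [Fin.reduceEq, true_iff, false_iff, not_and, not_lt] <;> omega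

theorem card_vertexClass_eq (a b : ℕ) :
    (fun c => (#{i | vertexClass a b i = c} : ℝ)) = ![1, 1, (a : ℝ), b] := by
  ext c
  rw [Fin.card_filter_eq_of_iff_mem_Ico _ _ ?_ (vertexClass_eq_iff a b · c)]
  all_goals fin_cases c <;> simp

-- The quotient matrix of the equitable partition into classes, for class sizes `1, 1, p, q`.
theorem classMatrix_mul_diagonal (p q : ℝ) :
    classMatrix * diagonal ![1, 1, p, q] =
      !![0, 2, p, 0;
         2, 0, 0, q;
         1, 0, 0, 0;
         0, 1, 0, 0] := by
  ext i j
  fin_cases i <;> fin_cases j <;> simp [classMatrix]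

theorem charpoly_classMatrix_mul_diagonal (p q : ℝ) :
    (classMatrix * diagonal ![1, 1, p, q]).charpoly =
      X ^ 4 - C (p + q + 4) * X ^ 2 + C (p * q) := by
  rw [classMatrix_mul_diagonal]
  simp [charpoly, charmatrix, det_succ_row_zero, Fin.sum_univ_succ, Fin.succAbove, map_ofNat C]
  ring

theorem charpoly_eq (a b : ℕ) (h : 4 ≤ a + b + 2) :
    (Gab a b).charpoly =
      X ^ (a + b + 2 - 4) * (X ^ 4 - C ((a : ℝ) + b + 4) * X ^ 2 + C ((a : ℝ) * b)) := by
  rw [eq_submatrix_classMatrix, charpoly_submatrix_self _ _ (by simpa using h),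
    card_vertexClass_eq, charpoly_classMatrix_mul_diagonal, Fintype.card_fin, Fintype.card_fin]

end Gab

/-- φ_{G(a,b)}(x) = x^{m-4}(x⁴ - (m+2)x² + ab), and
ρ(G(a,b))² = (m + 2 + √((m+2)² - 4ab))/2, where ρ is the largest root of φ. -/
theorem stmt_7 (a b m : ℕ) (hm : m = a + b + 2) (h4 : 4 ≤ m) :
    (Gab a b).charpoly =
      X ^ (m - 4) * (X ^ 4 - C ((m : ℝ) + 2) * X ^ 2 + C ((a : ℝ) * b)) ∧
    IsGreatest {x : ℝ | (Gab a b).charpoly.IsRoot x}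
      (Real.sqrt (((m : ℝ) + 2 + Real.sqrt (((m : ℝ) + 2) ^ 2 - 4 * a * b)) / 2)) := by
  subst hm
  have hcoeff : ((a + b + 2 : ℕ) : ℝ) + 2 = a + b + 4 := by push_cast; ring
  have hcharpoly := Gab.charpoly_eq a b h4
  rw [← hcoeff] at hcharpoly
  refine ⟨hcharpoly, ?_⟩
  rw [hcharpoly, mul_assoc (4 : ℝ)]
  exact isGreatest_setOf_isRoot_X_pow_mul_biquadratic _ (by positivity)
    (by rw [hcoeff]; nlinarith [sq_nonneg ((a : ℝ) - b)])
end

section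
/- Let m ≥ 6 and let ρ be the largest real root of x³ − x² − (m−1)x + (m−3) = 0. Then ρ⁴ − (m+2)ρ² + 2(m−4) < 0; consequently ρ is strictly less than the largest root of x⁴ − (m+2)x² + 2(m−4) = 0, namely √((m + 2 + √(m² − 4m + 36))/2). -/
/-!
The cubic `p = cubic m` takes the value `-2` at `√(m - 1)` and is positive at `m`, so it has a root beyond
`√(m - 1)`; hence its largest root satisfies `ρ² > m - 1` and `ρ > 2`. Dividing the quartic by `p`
gives `ρ⁴ - (m + 2)ρ² + 2(m - 4) = (ρ + 1) p(ρ) - 2ρ(ρ - 1) + m - 5`, and `2ρ(ρ - 1) ≥ ρ² > m - 1`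
makes this negative. A quadratic in `ρ²` that is negative there puts `ρ²` below its larger root.
-/

def cubic (m x : ℝ) : ℝ := x ^ 3 - x ^ 2 - (m - 1) * x + (m - 3)

lemma cubic_sqrt_sub_one {m : ℝ} (hm : 1 ≤ m) : cubic m √(m - 1) = -2 := by
  have hsq : √(m - 1) ^ 2 = m - 1 := Real.sq_sqrt (by linarith)
  have hcube : √(m - 1) ^ 3 = (m - 1) * √(m - 1) := by rw [pow_succ, hsq]
  simp only [cubic, hcube, hsq]
  ring

lemma cubic_self_pos {m : ℝ} (hm : 2 ≤ m) : 0 < cubic m m := by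
  simp only [cubic]
  nlinarith [mul_nonneg (sq_nonneg m) (sub_nonneg.2 hm)]

lemma exists_cubic_root_gt_sqrt {m : ℝ} (hm : 2 ≤ m) : ∃ x, √(m - 1) < x ∧ cubic m x = 0 := by
  have hle : √(m - 1) ≤ m := (Real.sqrt_le_left (by linarith)).2 (by nlinarith)
  have hcont : ContinuousOn (cubic m) (Set.Icc √(m - 1) m) := by
    unfold cubic
    fun_prop
  have hzero : (0 : ℝ) ∈ Set.Ioc (cubic m √(m - 1)) (cubic m m) := by
    rw [cubic_sqrt_sub_one (by linarith)]
    exact ⟨by norm_num, (cubic_self_pos hm).le⟩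
  obtain ⟨x, hx, hroot⟩ := intermediate_value_Ioc hle hcont hzero
  exact ⟨x, hx.1, hroot⟩

lemma sqrt_sub_one_lt_of_isGreatest {m ρ : ℝ} (hm : 2 ≤ m)
    (hρ : IsGreatest {x | cubic m x = 0} ρ) : √(m - 1) < ρ := by
  obtain ⟨x, hx, hroot⟩ := exists_cubic_root_gt_sqrt hm
  exact hx.trans_le (hρ.2 hroot)

lemma quartic_neg_of_cubic_eq_zero {m ρ : ℝ} (hm : 5 ≤ m) (hroot : cubic m ρ = 0)
    (hρ₀ : 0 ≤ ρ) (hρ : m - 1 < ρ ^ 2) : ρ ^ 4 - (m + 2) * ρ ^ 2 + 2 * (m - 4) < 0 := by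
  have hdiv : ρ ^ 4 - (m + 2) * ρ ^ 2 + 2 * (m - 4) = -2 * ρ * (ρ - 1) + m - 5 := by
    simp only [cubic] at hroot
    linear_combination (ρ + 1) * hroot
  have hρ₂ : 2 ≤ ρ := by nlinarith
  rw [hdiv]
  nlinarith

lemma lt_add_sqrt_discrim_div_two_of_neg {x b c : ℝ} (h : x ^ 2 - b * x + c < 0) :
    x < (b + √(b ^ 2 - 4 * c)) / 2 := by
  have hsq : (2 * x - b) ^ 2 < b ^ 2 - 4 * c := by linarith
  linarith [Real.lt_sqrt_of_sq_lt hsq]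

/-- for m ≥ 6, the largest real root ρ of x³ - x² - (m-1)x + (m-3)
satisfies ρ⁴ - (m+2)ρ² + 2(m-4) < 0, hence ρ < √((m + 2 + √(m² - 4m + 36))/2). -/
theorem stmt_10 (m ρ : ℝ) (hm : 6 ≤ m)
    (hρ : IsGreatest {x : ℝ | x ^ 3 - x ^ 2 - (m - 1) * x + (m - 3) = 0} ρ) :
    ρ ^ 4 - (m + 2) * ρ ^ 2 + 2 * (m - 4) < 0 ∧
    ρ < Real.sqrt ((m + 2 + Real.sqrt (m ^ 2 - 4 * m + 36)) / 2) := by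
  have hgt : √(m - 1) < ρ := sqrt_sub_one_lt_of_isGreatest (by linarith) hρ
  have hneg := quartic_neg_of_cubic_eq_zero (by linarith) hρ.1
    ((Real.sqrt_nonneg _).trans hgt.le) (Real.lt_sq_of_sqrt_lt hgt)
  refine ⟨hneg, Real.lt_sqrt_of_sq_lt ?_⟩
  have hroot := lt_add_sqrt_discrim_div_two_of_neg (x := ρ ^ 2) (b := m + 2) (c := 2 * (m - 4))
    (by linarith)
  rwa [show (m + 2) ^ 2 - 4 * (2 * (m - 4)) = m ^ 2 - 4 * m + 36 by ring] at hroot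
end

section
/- Suppose ρ is the largest root of x³ = x² + (m−1)x − (m−3) and ρ > √(m−1), m ≥ 6. Then ρ⁴ − (m+2)ρ² + 2(m−4) = −2(ρ − 1/2)² + m − 9/2 < 0. -/
/-! Multiplying the cubic by `ρ + 1` reduces the quartic to the quadratic `2ρ - 2ρ² + m - 5`.
Since `√(m - 1) < ρ` means `m - 1 < ρ²`, that quadratic is below `-(ρ - 1)² - 3`. -/

theorem quartic_eq_of_cubic_eq {R : Type*} [CommRing R] {m ρ : R}
    (h : ρ ^ 3 = ρ ^ 2 + (m - 1) * ρ - (m - 3)) :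
    ρ ^ 4 - (m + 2) * ρ ^ 2 + 2 * (m - 4) = 2 * ρ - 2 * ρ ^ 2 + m - 5 := by
  linear_combination (ρ + 1) * h

theorem neg_two_mul_sq_sub_half_add_lt_zero {m ρ : ℝ} (h : m - 1 < ρ ^ 2) :
    -2 * (ρ - 1 / 2) ^ 2 + m - 9 / 2 < 0 := by
  nlinarith [sq_nonneg (ρ - 1)]

theorem stmt_11_general (m ρ : ℝ)
    (hcubic : ρ ^ 3 = ρ ^ 2 + (m - 1) * ρ - (m - 3))
    (hρ : ρ > Real.sqrt (m - 1)) :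
    ρ ^ 4 - (m + 2) * ρ ^ 2 + 2 * (m - 4) = -2 * (ρ - 1 / 2) ^ 2 + m - 9 / 2 ∧
    -2 * (ρ - 1 / 2) ^ 2 + m - 9 / 2 < 0 := by
  have hρ_pos : 0 < ρ := (Real.sqrt_nonneg _).trans_lt hρ
  refine ⟨?_, neg_two_mul_sq_sub_half_add_lt_zero ((Real.sqrt_lt' hρ_pos).1 hρ)⟩
  rw [quartic_eq_of_cubic_eq hcubic]
  ring

/-- if ρ³ = ρ² + (m-1)ρ - (m-3) with ρ > √(m-1) and m ≥ 6, then
ρ⁴ - (m+2)ρ² + 2(m-4) = -2(ρ - 1/2)² + m - 9/2 < 0. -/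
theorem stmt_11 (m ρ : ℝ) (hm : 6 ≤ m)
    (hcubic : ρ ^ 3 = ρ ^ 2 + (m - 1) * ρ - (m - 3))
    (hρ : ρ > Real.sqrt (m - 1)) :
    ρ ^ 4 - (m + 2) * ρ ^ 2 + 2 * (m - 4) = -2 * (ρ - 1 / 2) ^ 2 + m - 9 / 2 ∧
    -2 * (ρ - 1 / 2) ^ 2 + m - 9 / 2 < 0 :=
  stmt_11_general m ρ hcubic hρ
end

section
/- Let m ≥ 15 be a real number and let α = 2/(m + 2 + √(m² − 4m + 36)), so 1/α = (m + 2 + √(m² − 4m + 36))/2 > m. Then (1/α − (m−2)) · (√(1−α) − √α)² > 1. -/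
/-!
Write `s = √(m² - 4m + 36)`, so that `1/α = (m + 2 + s)/2`. Since `m² - 4m + 36 = (m - 2)² + 32`,
`s > m - 2`; this gives `1/α > m` and `1/α - (m - 2) = (s - m + 6)/2 > 2`. For `m ≥ 15` also
`1/α > 15`, and for `0 < α < 1/15` one has `(√(1-α) - √α)² = 1 - 2√(α(1-α)) > 1/2`.
-/

open Real

lemma sub_two_lt_sqrt (m : ℝ) : m - 2 < √(m ^ 2 - 4 * m + 36) :=
  lt_sqrt_of_sq_lt (by nlinarith)

lemma sqrt_mul_one_sub_lt_quarter {α : ℝ} (h0 : 0 ≤ α) (h : α < 1 / 15) :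
    √(α * (1 - α)) < 1 / 4 :=
  (sqrt_lt' (by norm_num)).2 (by nlinarith)

lemma half_lt_sq_sqrt_one_sub_sub_sqrt {α : ℝ} (h0 : 0 ≤ α) (h : α < 1 / 15) :
    1 / 2 < (√(1 - α) - √α) ^ 2 := by
  have hexpand : (√(1 - α) - √α) ^ 2 = 1 - 2 * √(α * (1 - α)) := by
    rw [sub_sq, sq_sqrt (by linarith), sq_sqrt h0, sqrt_mul h0, mul_comm √α]
    ring
  rw [hexpand]
  linarith [sqrt_mul_one_sub_lt_quarter h0 h]

/-- for real m ≥ 15 and α = 2/(m + 2 + √(m² - 4m + 36)), one has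
1/α > m and (1/α - (m-2))(√(1-α) - √α)² > 1. -/
theorem stmt_12 (m α : ℝ) (hm : 15 ≤ m)
    (hα : α = 2 / (m + 2 + Real.sqrt (m ^ 2 - 4 * m + 36))) :
    1 / α > m ∧
    (1 / α - (m - 2)) * (Real.sqrt (1 - α) - Real.sqrt α) ^ 2 > 1 := by
  set s := √(m ^ 2 - 4 * m + 36)
  have hs : m - 2 < s := sub_two_lt_sqrt m
  have hinv : 1 / α = (m + 2 + s) / 2 := by rw [hα, one_div_div]
  refine ⟨by rw [hinv]; linarith, ?_⟩
  have hα0 : 0 ≤ α := by rw [hα]; exact div_nonneg zero_le_two (by linarith)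
  have hα15 : α < 1 / 15 := by
    rw [hα]
    calc 2 / (m + 2 + s) < 2 / 30 := div_lt_div_of_pos_left two_pos (by norm_num) (by linarith)
      _ = 1 / 15 := by norm_num
  have hfactor : 2 < 1 / α - (m - 2) := by rw [hinv]; linarith
  calc (1 : ℝ) = 2 * (1 / 2) := by norm_num
    _ < (1 / α - (m - 2)) * (√(1 - α) - √α) ^ 2 :=
      mul_lt_mul'' hfactor (half_lt_sq_sqrt_one_sub_sub_sqrt hα0 hα15) (by norm_num) (by norm_num)
end

section
/- Let H be a connected bicyclic k-uniform hypergraph with exactly two non-pendant vertices u and v (a vertex is pendant if it lies in exactly one edge). Then exactly three edges of H contain both u and v, and every other edge of H is a pendant edge attached at u or at v (i.e., contains exactly one of u,v and otherwise only pendant vertices). -/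
/-!
Every vertex other than `u` and `v` lies in a single edge, so an edge avoiding both `u` and `v`
would be a connected component on its own; by connectivity every edge meets `{u, v}`.
Counting incidences gives `deg u + deg v + (n - 2) = m k = n + 1 + m`, i.e. `deg u + deg v = m + 3`,
and since every edge contains `u` or `v`, inclusion–exclusion leaves exactly three edges
containing both.
-/

open Finset

namespace EdgeFamily

variable {V : Type*} [DecidableEq V] (E : Finset (Finset V))

def degree (x : V) : ℕ := #{e ∈ E | x ∈ e}

def Adj (a b : V) : Prop := ∃ e ∈ E, a ∈ e ∧ b ∈ e

variable {E}

theorem sum_degree [Fintype V] : ∑ x, degree E x = ∑ e ∈ E, #e :=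
  calc ∑ x, degree E x = ∑ x, #(E.bipartiteAbove (· ∈ ·) x) := rfl
    _ = ∑ e ∈ E, #(univ.bipartiteBelow (· ∈ ·) e) :=
      sum_card_bipartiteAbove_eq_sum_card_bipartiteBelow _
    _ = ∑ e ∈ E, #e := by simp only [bipartiteBelow, filter_univ_mem]

theorem mem_of_reflTransGen_adj {e : Finset V} (he : e ∈ E) (hdeg : ∀ x ∈ e, degree E x = 1)
    {w x : V} (hw : w ∈ e) (h : Relation.ReflTransGen (Adj E) w x) : x ∈ e := by
  induction h with
  | refl => exact hw
  | tail _ hbc hb =>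
    obtain ⟨f, hf, hbf, hcf⟩ := hbc
    have hfe : f = e :=
      card_le_one.mp (hdeg _ hb).le f (mem_filter.mpr ⟨hf, hbf⟩) e (mem_filter.mpr ⟨he, hb⟩)
    exact hfe ▸ hcf

variable {u v : V}

theorem mem_or_mem_of_forall_degree_eq_one (hconn : ∀ a b, Relation.ReflTransGen (Adj E) a b)
    (hpend : ∀ w, w ≠ u → w ≠ v → degree E w = 1) {e : Finset V} (he : e ∈ E)
    (hne : e.Nonempty) : u ∈ e ∨ v ∈ e := by
  by_contra! ⟨hue, hve⟩
  obtain ⟨w, hw⟩ := hne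
  refine hue (mem_of_reflTransGen_adj he (fun x hx => hpend x ?_ ?_) hw (hconn w u))
  · rintro rfl; exact hue hx
  · rintro rfl; exact hve hx

theorem sum_degree_eq_of_forall_degree_eq_one [Fintype V] (huv : u ≠ v)
    (hpend : ∀ w, w ≠ u → w ≠ v → degree E w = 1) :
    ∑ x, degree E x = degree E u + degree E v + (Fintype.card V - 2) := by
  have hv : v ∈ univ.erase u := mem_erase.mpr ⟨huv.symm, mem_univ v⟩
  have hrest : ∑ x ∈ (univ.erase u).erase v, degree E x = Fintype.card V - 2 := by
    rw [sum_congr rfl fun x hx => hpend x (ne_of_mem_erase (mem_of_mem_erase hx))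
      (ne_of_mem_erase hx), sum_const, smul_eq_mul, mul_one, card_erase_of_mem hv,
      card_erase_of_mem (mem_univ u), card_univ]
    rfl
  rw [← add_sum_erase _ _ (mem_univ u), ← add_sum_erase _ _ hv, hrest, add_assoc]

theorem card_filter_mem_and_mem_add_card (hcover : ∀ e ∈ E, u ∈ e ∨ v ∈ e) :
    #{e ∈ E | u ∈ e ∧ v ∈ e} + #E = degree E u + degree E v := by
  have hunion : {e ∈ E | u ∈ e ∨ v ∈ e} = E := filter_true_of_mem hcover
  rw [degree, degree, ← card_union_add_card_inter {e ∈ E | u ∈ e}, ← filter_or, ← filter_and, hunion, add_comm]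

end EdgeFamily

open EdgeFamily in
theorem stmt_18_general {V : Type*} [Fintype V] [DecidableEq V]
    (E : Finset (Finset V)) (k : ℕ) (hk : 2 ≤ k)
    (huniform : ∀ e ∈ E, e.card = k)
    (hconn : ∀ u v : V, Relation.ReflTransGen (fun a b => ∃ e ∈ E, a ∈ e ∧ b ∈ e) u v)
    (hcyc : Fintype.card V + 1 = E.card * (k - 1))
    (u v : V) (huv : u ≠ v)
    (hpend : ∀ w : V, w ≠ u → w ≠ v → (E.filter (fun e => w ∈ e)).card = 1) :
    (E.filter (fun e => u ∈ e ∧ v ∈ e)).card = 3 ∧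
    ∀ e ∈ E, ¬(u ∈ e ∧ v ∈ e) →
      ((u ∈ e ∧ v ∉ e) ∨ (v ∈ e ∧ u ∉ e)) ∧
      (∀ w ∈ e, w ≠ u → w ≠ v → (E.filter (fun f => w ∈ f)).card = 1) := by
  have hcover : ∀ e ∈ E, u ∈ e ∨ v ∈ e := fun e he =>
    mem_or_mem_of_forall_degree_eq_one hconn hpend he
      (card_pos.mp (by rw [huniform e he]; omega))
  have hincidences : ∑ x, degree E x = #E * (k - 1) + #E := by
    rw [sum_degree, sum_congr rfl huniform, sum_const, smul_eq_mul, ← Nat.mul_succ]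
    congr
    omega
  have hdegrees := sum_degree_eq_of_forall_degree_eq_one huv hpend
  have hboth := card_filter_mem_and_mem_add_card hcover
  have hn : 2 ≤ Fintype.card V := Fintype.one_lt_card_iff_nontrivial.mpr ⟨⟨u, v, huv⟩⟩
  refine ⟨by omega, fun e he hne => ⟨?_, fun w _ => hpend w⟩⟩
  rcases hcover e he with h | h
  · exact Or.inl ⟨h, fun h' => hne ⟨h, h'⟩⟩
  · exact Or.inr ⟨h, fun h' => hne ⟨h', h⟩⟩

/-- a connected bicyclic k-uniform hypergraph with exactly two non-pendant
vertices u,v has exactly three edges containing both u and v, and every other edge is a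
pendant edge attached at u or v. -/
theorem stmt_18 {V : Type*} [Fintype V] [DecidableEq V]
    (E : Finset (Finset V)) (k : ℕ) (hk : 2 ≤ k)
    (huniform : ∀ e ∈ E, e.card = k)
    (hconn : ∀ u v : V, Relation.ReflTransGen (fun a b => ∃ e ∈ E, a ∈ e ∧ b ∈ e) u v)
    (hcyc : Fintype.card V + 1 = E.card * (k - 1))
    (u v : V) (huv : u ≠ v)
    (hu : (E.filter (fun e => u ∈ e)).card ≠ 1)
    (hv : (E.filter (fun e => v ∈ e)).card ≠ 1)
    (hpend : ∀ w : V, w ≠ u → w ≠ v → (E.filter (fun e => w ∈ e)).card = 1) :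
    (E.filter (fun e => u ∈ e ∧ v ∈ e)).card = 3 ∧
    ∀ e ∈ E, ¬(u ∈ e ∧ v ∈ e) →
      ((u ∈ e ∧ v ∉ e) ∨ (v ∈ e ∧ u ∉ e)) ∧
      (∀ w ∈ e, w ≠ u → w ≠ v → (E.filter (fun f => w ∈ f)).card = 1) :=
  stmt_18_general E k hk huniform hconn hcyc u v huv hpend
end
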